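/- arXiv:2508.02918 — 8 statements merged into one kernel-verified Lean document; each statement's English description precedes it below -/
import Mathlib

section
/- The polynomial p(u) = -6√6 u^14 + 42√3 u^13 - 3(13√6 - 48) u^12 - 6(7√3 - 48√2) u^11 + 3(43√6 - 1224) u^10 - 30(7√3 - 60√2) u^9 + 36(15√6 + 236) u^8 - 4320√2 u^7 + 36(15√6 - 238) u^6 + 6(35√3 + 348√2) u^5 + 3(43√6 + 1296) u^4 + 6(7√3 + 72√2) u^3 - 39√6 u^2 - 42√3 u - 6√6 has no real root in the open interval (√2, √2 + √3). -/
set_option maxHeartbeats 1000000 in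
/-- The numerator polynomial of the reparametrized coefficient `α₁` for two nested
regular tetrahedra has no real root in `(√2, √2 + √3)`.  Here `√6 = √3·√2`. -/
theorem stmt7 :
    ∀ u ∈ Set.Ioo (Real.sqrt 2) (Real.sqrt 2 + Real.sqrt 3),
      (-6 * (Real.sqrt 3 * Real.sqrt 2) * u ^ 14
        + 42 * Real.sqrt 3 * u ^ 13
        - 3 * (13 * (Real.sqrt 3 * Real.sqrt 2) - 48) * u ^ 12
        - 6 * (7 * Real.sqrt 3 - 48 * Real.sqrt 2) * u ^ 11
        + 3 * (43 * (Real.sqrt 3 * Real.sqrt 2) - 1224) * u ^ 10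
        - 30 * (7 * Real.sqrt 3 - 60 * Real.sqrt 2) * u ^ 9
        + 36 * (15 * (Real.sqrt 3 * Real.sqrt 2) + 236) * u ^ 8
        - 4320 * Real.sqrt 2 * u ^ 7
        + 36 * (15 * (Real.sqrt 3 * Real.sqrt 2) - 238) * u ^ 6
        + 6 * (35 * Real.sqrt 3 + 348 * Real.sqrt 2) * u ^ 5
        + 3 * (43 * (Real.sqrt 3 * Real.sqrt 2) + 1296) * u ^ 4
        + 6 * (7 * Real.sqrt 3 + 72 * Real.sqrt 2) * u ^ 3
        - 39 * (Real.sqrt 3 * Real.sqrt 2) * u ^ 2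
        - 42 * Real.sqrt 3 * u
        - 6 * (Real.sqrt 3 * Real.sqrt 2)) ≠ 0 := by
  intro u hu
  obtain ⟨hu1, hu2⟩ := hu
  set a := Real.sqrt 2 with ha_def
  set b := Real.sqrt 3 with hb_def
  have ha2 : a ^ 2 = 2 := Real.sq_sqrt (by norm_num)
  have hb2 : b ^ 2 = 3 := Real.sq_sqrt (by norm_num)
  have ha0 : (0:ℝ) ≤ a := Real.sqrt_nonneg 2
  have hb0 : (0:ℝ) ≤ b := Real.sqrt_nonneg 3
  have ha1 : (1.41421:ℝ) < a := by nlinarith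
  have ha1' : a < 1.41422 := by nlinarith
  have hb1 : (1.73205:ℝ) < b := by nlinarith
  have hb1' : b < 1.73206 := by nlinarith
  have hab1 : (2.44 :ℝ) < a * b := by nlinarith
  have hab1' : a * b < 2.45 := by nlinarith
  set t := u - a with ht_def
  have ht0 : 0 < t := by simp only [ht_def]; linarith
  have htb : t < b := by simp only [ht_def]; linarith
  have key : (-6 * (b * a) * u ^ 14
        + 42 * b * u ^ 13
        - 3 * (13 * (b * a) - 48) * u ^ 12
        - 6 * (7 * b - 48 * a) * u ^ 11
        + 3 * (43 * (b * a) - 1224) * u ^ 10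
        - 30 * (7 * b - 60 * a) * u ^ 9
        + 36 * (15 * (b * a) + 236) * u ^ 8
        - 4320 * a * u ^ 7
        + 36 * (15 * (b * a) - 238) * u ^ 6
        + 6 * (35 * b + 348 * a) * u ^ 5
        + 3 * (43 * (b * a) + 1296) * u ^ 4
        + 6 * (7 * b + 72 * a) * u ^ 3
        - 39 * (b * a) * u ^ 2
        - 42 * b * u
        - 6 * (b * a))
      = 13122*(a*b)
        + 91854*b*t
        + 142155*(a*b)*t^2
        + (256122*b - 34992*a)*t^3
        + (147987*(a*b) - 151632)*t^4
        + (112914*b - 96552*a)*t^5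
        + (55944 + 26244*(a*b))*t^6
        + 148320*a*t^7
        + (185616 - 8748*(a*b))*t^8
        + (21672 - 5481*(a*b))*t^10
        + t^9 * ((60120*a - 12546*b) + (2016*a - 3162*b)*t^2
            + (144 - 585*(a*b))*t^3 - 126*b*t^4 - 6*(a*b)*t^5) := by
    simp only [ht_def]
    linear_combination ((-39363)*a^1*b^1 + (-76665)*a^3*b^1 + (-58320)*a^4 + (-20796)*a^5*b^1 + (47088)*a^6 + (2724)*a^7*b^1 + (42192)*a^8 + (3261)*a^9*b^1 + (1872)*a^10 + (471)*a^11*b^1 + (6)*a^13*b^1 + (45948)*u^1*b^1 + (265002)*u^1*a^2*b^1 + (250776)*u^1*a^3 + (118812)*u^1*a^4*b^1 + (-283824)*u^1*a^5 + (-19326)*u^1*a^6*b^1 + (-365256)*u^1*a^7 + (-31128)*u^1*a^8*b^1 + (-20448)*u^1*a^9 + (-5550)*u^1*a^10*b^1 + (-84)*u^1*a^12*b^1 + (-313086)*u^2*a^1*b^1 + (-402408)*u^2*a^2 + (-277152)*u^2*a^3*b^1 + (701136)*u^2*a^4 + (58254)*u^2*a^5*b^1 + (1391832)*u^2*a^6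 + (132483)*u^2*a^7*b^1 + (101376)*u^2*a^8 + (29874)*u^2*a^9*b^1 + (546)*u^2*a^11*b^1 + (128040)*u^3*b^1 + (285552)*u^3*a^1 + (332616)*u^3*a^2*b^1 + (-899424)*u^3*a^3 + (-96132)*u^3*a^4*b^1 + (-3051360)*u^3*a^5 + (-330054)*u^3*a^6*b^1 + (-300960)*u^3*a^7 + (-97032)*u^3*a^8*b^1 + (-2184)*u^3*a^10*b^1 + (-77760)*u^4 + (-208356)*u^4*a^1*b^1 + (622080)*u^4*a^2 + (92652)*u^4*a^3*b^1 + (4212000)*u^4*a^4 + (530544)*u^4*a^5*b^1 + (594000)*u^4*a^6 + (211497)*u^4*a^7*b^1 + (6006)*u^4*a^9*b^1 + (56352)*u^5*b^1 + (-217152)*u^5*a^1 + (-50556)*u^5*a^2*b^1 + (-3748464)*u^5*a^3 + (-570732)*u^5*a^4*b^1 + (-817344)*u^5*a^5 + (-325182)*u^5*a^6*b^1 + (-12012)*u^5*a^8*b^1 + (32256)*u^6 + (12852)*u^6*a^1*b^1 + (2095632)*u^6*a^2 + (410886)*u^6*a^3*b^1 + (798336)*u^6*a^4 + (360360)*u^6*a^5*b^1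 + (18018)*u^6*a^7*b^1 + (-666144)*u^7*a^1 + (-190836)*u^7*a^2*b^1 + (-551232)*u^7*a^3 + (-288288)*u^7*a^4*b^1 + (-20592)*u^7*a^6*b^1 + (88560)*u^8 + (51813)*u^8*a^1*b^1 + (261360)*u^8*a^2 + (163449)*u^8*a^3*b^1 + (18018)*u^8*a^5*b^1 + (-6168)*u^9*b^1 + (-79200)*u^9*a^1 + (-62634)*u^9*a^2*b^1 + (-12012)*u^9*a^4*b^1 + (12672)*u^10 + (14586)*u^10*a^1*b^1 + (6006)*u^10*a^3*b^1 + (-1560)*u^11*b^1 + (-2184)*u^11*a^2*b^1 + (546)*u^12*a^1*b^1 + (-84)*u^13*b^1) * ha2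
  rw [key]
  have ht2 : t ^ 2 ≤ 3 := by linarith [mul_nonneg (sub_nonneg.2 htb.le) (by linarith : (0:ℝ) ≤ b + t), hb2]
  have ht3 : t ^ 3 ≤ 3 * b := by linarith [mul_nonneg ht0.le (sub_nonneg.2 ht2), htb]
  have ht4 : t ^ 4 ≤ 9 := by linarith [mul_nonneg (sub_nonneg.2 ht2) (by positivity : (0:ℝ) ≤ 3 + t ^ 2)]
  have ht5 : t ^ 5 ≤ 9 * b := by linarith [mul_nonneg ht0.le (sub_nonneg.2 ht4), htb]
  have hab2 : a * b ^ 2 = 3 * a := by linear_combination a * hb2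
  have hA : (2016 * a - 3162 * b) * t ^ 2 ≥ 6048 * a - 9486 * b := by
    linarith [mul_nonneg (by linarith : (0:ℝ) ≤ 3162 * b - 2016 * a) (sub_nonneg.2 ht2)]
  have hB : (144 - 585 * (a * b)) * t ^ 3 ≥ 432 * b - 5265 * a := by
    linarith [mul_nonneg (by linarith : (0:ℝ) ≤ 585 * (a * b) - 144) (sub_nonneg.2 ht3), hab2]
  have hC : 126 * b * t ^ 4 ≤ 1134 * b := by
    linarith [mul_nonneg (by positivity : (0:ℝ) ≤ 126 * b) (sub_nonneg.2 ht4)]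
  have hD : 6 * (a * b) * t ^ 5 ≤ 162 * a := by
    linarith [mul_nonneg (by positivity : (0:ℝ) ≤ 6 * (a * b)) (sub_nonneg.2 ht5), hab2]
  have hR : (0:ℝ) ≤ (60120 * a - 12546 * b) + (2016 * a - 3162 * b) * t ^ 2
      + (144 - 585 * (a * b)) * t ^ 3 - 126 * b * t ^ 4 - 6 * (a * b) * t ^ 5 := by
    linarith [hA, hB, hC, hD]
  have h9R : (0:ℝ) ≤ t ^ 9 * ((60120 * a - 12546 * b) + (2016 * a - 3162 * b) * t ^ 2
      + (144 - 585 * (a * b)) * t ^ 3 - 126 * b * t ^ 4 - 6 * (a * b) * t ^ 5) :=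
    mul_nonneg (by positivity) hR
  have p1 : (0:ℝ) < 13122 * (a * b) := by linarith
  have p2 : (0:ℝ) ≤ 91854 * b * t := by positivity
  have p3 : (0:ℝ) ≤ 142155 * (a * b) * t ^ 2 := by positivity
  have p4 : (0:ℝ) ≤ (256122 * b - 34992 * a) * t ^ 3 :=
    mul_nonneg (by linarith) (by positivity)
  have p5 : (0:ℝ) ≤ (147987 * (a * b) - 151632) * t ^ 4 :=
    mul_nonneg (by linarith) (by positivity)
  have p6 : (0:ℝ) ≤ (112914 * b - 96552 * a) * t ^ 5 :=
    mul_nonneg (by linarith) (by positivity)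
  have p7 : (0:ℝ) ≤ (55944 + 26244 * (a * b)) * t ^ 6 :=
    mul_nonneg (by linarith) (by positivity)
  have p8 : (0:ℝ) ≤ 148320 * a * t ^ 7 := by positivity
  have p9 : (0:ℝ) ≤ (185616 - 8748 * (a * b)) * t ^ 8 :=
    mul_nonneg (by linarith) (by positivity)
  have p10 : (0:ℝ) ≤ (21672 - 5481 * (a * b)) * t ^ 10 :=
    mul_nonneg (by linarith) (by positivity)
  have hE : (0:ℝ) < 13122*(a*b)
        + 91854*b*t
        + 142155*(a*b)*t^2
        + (256122*b - 34992*a)*t^3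
        + (147987*(a*b) - 151632)*t^4
        + (112914*b - 96552*a)*t^5
        + (55944 + 26244*(a*b))*t^6
        + 148320*a*t^7
        + (185616 - 8748*(a*b))*t^8
        + (21672 - 5481*(a*b))*t^10
        + t^9 * ((60120*a - 12546*b) + (2016*a - 3162*b)*t^2
            + (144 - 585*(a*b))*t^3 - 126*b*t^4 - 6*(a*b)*t^5) := by linarith
  exact ne_of_gt hE
end

section
/- The function α_1(t) = -(1/2)(9√2 t - 72(t² + 6t + 1)/(3t² + 2t + 3)^{3/2} - 8√3/(t - 1) + 9√2/t²) is strictly negative for all t ∈ (0, 1). -/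
/-- Coefficient of `c` in `det(T₁)` for two nested regular tetrahedra. -/
noncomputable def alpha1 (t : ℝ) : ℝ :=
  -(1 / 2) * (9 * Real.sqrt 2 * t
    - 72 * (t ^ 2 + 6 * t + 1) / (Real.sqrt (3 * t ^ 2 + 2 * t + 3)) ^ 3
    - 8 * Real.sqrt 3 / (t - 1)
    + 9 * Real.sqrt 2 / t ^ 2)

/-- Constant term (in `c`) of `det(T₁)` for two nested regular tetrahedra. -/
noncomputable def alpha0 (t : ℝ) : ℝ :=
  -9 * (3 * t + 1) * (t + 3) / (3 * t ^ 2 + 2 * t + 3) ^ 3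
    - 2 * Real.sqrt 3 / ((Real.sqrt (3 * t ^ 2 + 2 * t + 3)) ^ 3 * (t - 1))
    + 9 / (32 * t ^ 2)
    + 1 / (3 * (t - 1) ^ 4)

lemma aux_poly (t : ℝ) (h0 : 0 < t) (h1 : t < 1) :
    518400 * (t^2+6*t+1)^2 ≤ 91809 * (3*t^2+2*t+3)^3 := by
  have ht : (0:ℝ) < 1 - t := by linarith
  nlinarith [mul_nonneg (pow_nonneg h0.le 0) (pow_nonneg ht.le 13), mul_nonneg (pow_nonneg h0.le 1) (pow_nonneg ht.le 12), mul_nonneg (pow_nonneg h0.le 2) (pow_nonneg ht.le 11), mul_nonneg (pow_nonneg h0.le 3) (pow_nonneg ht.le 10), mul_nonneg (pow_nonneg h0.le 4) (pow_nonneg ht.le 9), mul_nonneg (pow_nonneg h0.le 5) (pow_nonneg ht.le 8), mul_nonneg (pow_nonneg h0.le 6) (pow_nonneg ht.le 7), mul_nonneg (pow_nonneg h0.le 7) (pow_nonneg ht.le 6), mul_nonneg (pow_nonneg h0.le 8) (pow_nonneg ht.le 5), mul_nonneg (pow_nonneg h0.le 9) (pow_nonneg ht.le 4), mul_nonneg (pow_nonneg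 h0.le 10) (pow_nonneg ht.le 3), mul_nonneg (pow_nonneg h0.le 11) (pow_nonneg ht.le 2), mul_nonneg (pow_nonneg h0.le 12) (pow_nonneg ht.le 1), mul_nonneg (pow_nonneg h0.le 13) (pow_nonneg ht.le 0)]

/-- `α₁(t) < 0` for all `t ∈ (0,1)`. -/
theorem stmt8 : ∀ t ∈ Set.Ioo (0 : ℝ) 1, alpha1 t < 0 := by
  rintro t ⟨h0, h1⟩
  have ht : (0:ℝ) < 1 - t := by linarith
  have h2 : (1.414:ℝ) ≤ Real.sqrt 2 := by
    nlinarith [Real.sq_sqrt (show (0:ℝ) ≤ 2 by norm_num), Real.sqrt_nonneg 2]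
  have h3 : (1.732:ℝ) ≤ Real.sqrt 3 := by
    nlinarith [Real.sq_sqrt (show (0:ℝ) ≤ 3 by norm_num), Real.sqrt_nonneg 3]
  set s := Real.sqrt (3 * t ^ 2 + 2 * t + 3) with hs
  have hsarg : (0:ℝ) < 3 * t ^ 2 + 2 * t + 3 := by nlinarith
  have hspos : 0 < s := Real.sqrt_pos.2 hsarg
  have hs2 : s ^ 2 = 3 * t ^ 2 + 2 * t + 3 := Real.sq_sqrt hsarg.le
  have hcube : s ^ 3 * s ^ 3 = (3 * t ^ 2 + 2 * t + 3) ^ 3 := by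
    rw [← hs2]; ring
  have hpoly := aux_poly t h0 h1
  have hM : 72 * (t ^ 2 + 6 * t + 1) ≤ (303/10) * s ^ 3 := by
    nlinarith [pow_pos hspos 3, sq_nonneg t]
  have hD : 72 * (t ^ 2 + 6 * t + 1) / s ^ 3 ≤ 303/10 := by
    rw [div_le_iff₀ (pow_pos hspos 3)]; linarith
  have hX : 8 * Real.sqrt 3 / (t - 1) = -(8 * Real.sqrt 3 / (1 - t)) := by
    rw [show t - 1 = -(1 - t) by ring, div_neg]
  have hA : 0 ≤ 9 * Real.sqrt 2 * t := by positivity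
  have hkey : (303:ℝ)/10 < 9 * Real.sqrt 2 * t + 8 * Real.sqrt 3 / (1 - t)
      + 9 * Real.sqrt 2 / t ^ 2 := by
    rcases le_or_gt t (7/10) with hc | hc
    · have hB : (25:ℝ) ≤ 9 * Real.sqrt 2 / t ^ 2 := by
        rw [le_div_iff₀ (by positivity)]; nlinarith
      have hC : (13:ℝ) ≤ 8 * Real.sqrt 3 / (1 - t) := by
        rw [le_div_iff₀ ht]; nlinarith
      linarith
    · have hB : (0:ℝ) < 9 * Real.sqrt 2 / t ^ 2 := by positivity
      have hC : (40:ℝ) ≤ 8 * Real.sqrt 3 / (1 - t) := by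
        rw [le_div_iff₀ ht]; nlinarith
      linarith
  unfold alpha1
  rw [hX]
  nlinarith [hD, hkey]
end

section
/- The function α_0(t) = -9(3t + 1)(t + 3)/(3t² + 2t + 3)³ - 2√3/((3t² + 2t + 3)^{3/2}(t - 1)) + 9/(32t²) + 1/(3(t - 1)^4) is strictly positive for all t ∈ (0, 1). -/
lemma add_div_pow_three_le_two_div_sq {a q : ℝ} (ha : 0 < a) (haq : a ≤ q) :
    (q + a) / q ^ 3 ≤ 2 / a ^ 2 := by
  have hq : 0 < q := ha.trans_le haq
  rw [div_le_div_iff₀ (by positivity) (by positivity)]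
  nlinarith [mul_le_mul_of_nonneg_left (pow_le_pow_left₀ ha.le haq 2) hq.le,
    pow_le_pow_left₀ ha.le haq 3]

lemma eight_mul_le_quadratic (t : ℝ) : 8 * t ≤ 3 * t ^ 2 + 2 * t + 3 := by
  nlinarith [sq_nonneg (t - 1)]

/-- `α₀(t) > 0` for all `t ∈ (0,1)`. -/
theorem stmt9 : ∀ t ∈ Set.Ioo (0 : ℝ) 1, 0 < alpha0 t := by
  rintro t ⟨ht0, ht1⟩
  have hrational : 9 * (3 * t + 1) * (t + 3) / (3 * t ^ 2 + 2 * t + 3) ^ 3 ≤ 9 / (32 * t ^ 2) := by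
    have h := add_div_pow_three_le_two_div_sq (by positivity) (eight_mul_le_quadratic t)
    calc 9 * (3 * t + 1) * (t + 3) / (3 * t ^ 2 + 2 * t + 3) ^ 3
        = 9 * ((3 * t ^ 2 + 2 * t + 3 + 8 * t) / (3 * t ^ 2 + 2 * t + 3) ^ 3) := by ring
      _ ≤ 9 * (2 / (8 * t) ^ 2) := by gcongr
      _ = 9 / (32 * t ^ 2) := by field_simp; ring
  have hsqrt : 2 * Real.sqrt 3 / ((Real.sqrt (3 * t ^ 2 + 2 * t + 3)) ^ 3 * (t - 1)) < 0 :=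
    div_neg_of_pos_of_neg (by positivity)
      (mul_neg_of_pos_of_neg (by positivity) (by linarith))
  have hlast : 0 < 1 / (3 * (t - 1) ^ 4) := by
    have : t - 1 ≠ 0 := by linarith
    positivity
  unfold alpha0
  simp only [neg_mul, neg_div]
  linarith
end

section
/- For t ∈ (0,1), the value c(t) = -α_0(t)/α_1(t) is strictly positive, where α_0(t) = -9(3t + 1)(t + 3)/(3t² + 2t + 3)³ - 2√3/((3t² + 2t + 3)^{3/2}(t - 1)) + 9/(32t²) + 1/(3(t - 1)^4) and α_1(t) = -(1/2)(9√2 t - 72(t² + 6t + 1)/(3t² + 2t + 3)^{3/2} - 8√3/(t - 1) + 9√2/t²). -/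
set_option maxHeartbeats 1000000
/-- `c(t) = -α₀(t)/α₁(t) > 0` for all `t ∈ (0,1)`. -/
theorem stmt10 : ∀ t ∈ Set.Ioo (0 : ℝ) 1, 0 < -alpha0 t / alpha1 t := by
  intro t ht
  obtain ⟨ht0, ht1⟩ := ht
  have h1t : 0 < 1 - t := by linarith
  have htne : t ≠ 0 := ne_of_gt ht0
  have ht1ne : t - 1 ≠ 0 := sub_ne_zero_of_ne (ne_of_lt ht1)
  have hq0 : (0 : ℝ) < 3 * t ^ 2 + 2 * t + 3 := by nlinarith
  have hq3 : (3 : ℝ) ≤ 3 * t ^ 2 + 2 * t + 3 := by nlinarith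
  have hqne : (3 * t ^ 2 + 2 * t + 3 : ℝ) ≠ 0 := ne_of_gt hq0
  have hspos : 0 < Real.sqrt (3 * t ^ 2 + 2 * t + 3) := Real.sqrt_pos.mpr hq0
  have hs2 : (Real.sqrt (3 * t ^ 2 + 2 * t + 3)) ^ 2 = 3 * t ^ 2 + 2 * t + 3 :=
    Real.sq_sqrt hq0.le
  have hs3 : Real.sqrt 3 ≤ Real.sqrt (3 * t ^ 2 + 2 * t + 3) := Real.sqrt_le_sqrt hq3
  have hr2 : (Real.sqrt 2) ^ 2 = 2 := Real.sq_sqrt (by norm_num)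
  have hr3 : (Real.sqrt 3) ^ 2 = 3 := Real.sq_sqrt (by norm_num)
  have hr2p : 0 < Real.sqrt 2 := Real.sqrt_pos.mpr (by norm_num)
  have hr3p : 0 < Real.sqrt 3 := Real.sqrt_pos.mpr (by norm_num)
  have h2lb : (1.41 : ℝ) < Real.sqrt 2 := by nlinarith [hr2, hr2p]
  have h3ub : Real.sqrt 3 < (1.74 : ℝ) := by nlinarith [hr3, hr3p]
  -- Positivity of the cleared-denominator polynomial for α₀ (Bernstein certificate)
  have hP : 0 < 729 * (1 - t) ^ 10 + 5832 * t ^ 1 * (1 - t) ^ 9 + 19656 * t ^ 2 * (1 - t) ^ 8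
      + 34560 * t ^ 3 * (1 - t) ^ 7 + 52992 * t ^ 4 * (1 - t) ^ 6
      + 110848 * t ^ 5 * (1 - t) ^ 5 + 199424 * t ^ 6 * (1 - t) ^ 4
      + 237568 * t ^ 7 * (1 - t) ^ 3 + 182272 * t ^ 8 * (1 - t) ^ 2
      + 81920 * t ^ 9 * (1 - t) ^ 1 + 16384 * t ^ 10 := by
    have h1 : 0 < (1 - t) ^ 10 := pow_pos h1t 10
    have h2 : ∀ (a b : ℕ), 0 < t ^ a * (1 - t) ^ b :=
      fun a b => mul_pos (pow_pos ht0 a) (pow_pos h1t b)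
    have h3 : 0 < t ^ 10 := pow_pos ht0 10
    have := h2 1 9; have := h2 2 8; have := h2 3 7; have := h2 4 6; have := h2 5 5
    have := h2 6 4; have := h2 7 3; have := h2 8 2; have := h2 9 1
    linarith
  have hden : 0 < 96 * t ^ 2 * (1 - t) ^ 4 * (3 * t ^ 2 + 2 * t + 3) ^ 3 := by
    have := pow_pos ht0 2
    have := pow_pos h1t 4
    have := pow_pos hq0 3
    positivity
  -- α₀ > 0
  have hT2 : 0 < -(2 * Real.sqrt 3 / ((Real.sqrt (3 * t ^ 2 + 2 * t + 3)) ^ 3 * (t - 1))) := by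
    rw [neg_pos]
    exact div_neg_of_pos_of_neg (by positivity)
      (mul_neg_of_pos_of_neg (pow_pos hspos 3) (by linarith))
  have hbig : -9 * (3 * t + 1) * (t + 3) / (3 * t ^ 2 + 2 * t + 3) ^ 3
      + 9 / (32 * t ^ 2) + 1 / (3 * (t - 1) ^ 4)
      = (729 * (1 - t) ^ 10 + 5832 * t ^ 1 * (1 - t) ^ 9 + 19656 * t ^ 2 * (1 - t) ^ 8
      + 34560 * t ^ 3 * (1 - t) ^ 7 + 52992 * t ^ 4 * (1 - t) ^ 6
      + 110848 * t ^ 5 * (1 - t) ^ 5 + 199424 * t ^ 6 * (1 - t) ^ 4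
      + 237568 * t ^ 7 * (1 - t) ^ 3 + 182272 * t ^ 8 * (1 - t) ^ 2
      + 81920 * t ^ 9 * (1 - t) ^ 1 + 16384 * t ^ 10)
      / (96 * t ^ 2 * (1 - t) ^ 4 * (3 * t ^ 2 + 2 * t + 3) ^ 3) := by
    rw [div_add_div _ _ (by positivity) (by apply mul_ne_zero; norm_num; positivity),
      div_add_div _ _ (by apply mul_ne_zero (by positivity) (by apply mul_ne_zero; norm_num; positivity)) (by
        apply mul_ne_zero; norm_num
        intro h
        exact ht1ne (pow_eq_zero_iff (by norm_num) |>.mp h)),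
      div_eq_div_iff (by
        apply mul_ne_zero (mul_ne_zero (by positivity) (mul_ne_zero (by norm_num) (by positivity))) _
        apply mul_ne_zero; norm_num
        intro h
        exact ht1ne (pow_eq_zero_iff (by norm_num) |>.mp h)) (ne_of_gt hden)]
    ring
  have hR : 0 < -9 * (3 * t + 1) * (t + 3) / (3 * t ^ 2 + 2 * t + 3) ^ 3
      + 9 / (32 * t ^ 2) + 1 / (3 * (t - 1) ^ 4) := by
    rw [hbig]; exact div_pos hP hden
  have h0 : 0 < alpha0 t := by unfold alpha0; linarith
  -- bound on the sqrt term of α₁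
  have hbound : 72 * (t ^ 2 + 6 * t + 1) / (Real.sqrt (3 * t ^ 2 + 2 * t + 3)) ^ 3
      ≤ 24 * Real.sqrt 3 := by
    have hnum : 72 * (t ^ 2 + 6 * t + 1) ≤ 72 * (3 * t ^ 2 + 2 * t + 3) := by nlinarith
    have hden' : Real.sqrt 3 * (3 * t ^ 2 + 2 * t + 3)
        ≤ (Real.sqrt (3 * t ^ 2 + 2 * t + 3)) ^ 3 := by
      have h : (Real.sqrt (3 * t ^ 2 + 2 * t + 3)) ^ 3
          = Real.sqrt (3 * t ^ 2 + 2 * t + 3) * (3 * t ^ 2 + 2 * t + 3) := by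
        linear_combination Real.sqrt (3 * t ^ 2 + 2 * t + 3) * hs2
      rw [h]
      exact mul_le_mul_of_nonneg_right hs3 hq0.le
    calc 72 * (t ^ 2 + 6 * t + 1) / (Real.sqrt (3 * t ^ 2 + 2 * t + 3)) ^ 3
        ≤ 72 * (3 * t ^ 2 + 2 * t + 3) / (Real.sqrt 3 * (3 * t ^ 2 + 2 * t + 3)) := by
          apply div_le_div₀ (by positivity) hnum (by positivity) hden'
      _ = 24 * Real.sqrt 3 := by
          rw [div_eq_iff (by positivity : Real.sqrt 3 * (3 * t ^ 2 + 2 * t + 3) ≠ 0)]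
          linear_combination (-24 * (3 * t ^ 2 + 2 * t + 3)) * hr3
  have hT3 : 8 * Real.sqrt 3 / (t - 1) = -(8 * Real.sqrt 3 / (1 - t)) := by
    rw [show t - 1 = -(1 - t) by ring, div_neg]
  -- α₁ < 0
  have hA : 0 < 9 * Real.sqrt 2 * t
      - 72 * (t ^ 2 + 6 * t + 1) / (Real.sqrt (3 * t ^ 2 + 2 * t + 3)) ^ 3
      - 8 * Real.sqrt 3 / (t - 1)
      + 9 * Real.sqrt 2 / t ^ 2 := by
    have hpos1 : 0 < 9 * Real.sqrt 2 * t := by positivity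
    have hpos3 : 0 < 8 * Real.sqrt 3 / (1 - t) := by positivity
    rcases le_or_gt t (1 / 2) with hc | hc
    · have ht2 : t ^ 2 ≤ 1 / 4 := by nlinarith
      have h4 : 36 * Real.sqrt 2 ≤ 9 * Real.sqrt 2 / t ^ 2 := by
        rw [le_div_iff₀ (by positivity)]
        have := mul_le_mul_of_nonneg_left ht2 hr2p.le
        linarith
      have cmp : 24 * Real.sqrt 3 < 36 * Real.sqrt 2 := by linarith
      rw [hT3]
      linarith
    · have h1' : 9 * Real.sqrt 2 / 2 ≤ 9 * Real.sqrt 2 * t := by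
        have := mul_le_mul_of_nonneg_left hc.le hr2p.le
        linarith
      have ht2 : t ^ 2 ≤ 1 := by nlinarith
      have h4 : 9 * Real.sqrt 2 ≤ 9 * Real.sqrt 2 / t ^ 2 := by
        rw [le_div_iff₀ (by positivity)]
        have := mul_le_mul_of_nonneg_left ht2 hr2p.le
        linarith
      have h3' : 16 * Real.sqrt 3 ≤ 8 * Real.sqrt 3 / (1 - t) := by
        rw [le_div_iff₀ h1t]
        have := mul_le_mul_of_nonneg_left (show (1 : ℝ) - t ≤ 1 / 2 by linarith) hr3p.le
        linarith
      have cmp : 8 * Real.sqrt 3 < 27 / 2 * Real.sqrt 2 := by linarith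
      rw [hT3]
      linarith
  have h1' : 0 < -alpha1 t := by unfold alpha1; linarith
  rw [neg_div, ← div_neg]
  exact div_pos h0 h1'
end

section
/- The polynomial q(u) = -4u^8 + 12√2 u^7 - 48u^6 + 8√2 u^5 + 36u^4 + 12√2 u^3 has no real root in the open interval (√2, √2 + √3). -/
/-- The polynomial `q(u) = -4u⁸ + 12√2 u⁷ - 48u⁶ + 8√2 u⁵ + 36u⁴ + 12√2 u³` has no
real root in the open interval `(√2, √2 + √3)`. -/
theorem stmt11 :
    ∀ u ∈ Set.Ioo (Real.sqrt 2) (Real.sqrt 2 + Real.sqrt 3),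
      (-4 * u ^ 8 + 12 * Real.sqrt 2 * u ^ 7 - 48 * u ^ 6 + 8 * Real.sqrt 2 * u ^ 5
        + 36 * u ^ 4 + 12 * Real.sqrt 2 * u ^ 3) ≠ 0 := by
  intro u hu
  obtain ⟨h1, _⟩ := hu
  set s := Real.sqrt 2 with hs
  have hs2 : s ^ 2 = 2 := Real.sq_sqrt (by norm_num)
  have hspos : 0 < s := Real.sqrt_pos.mpr (by norm_num)
  have hupos : 0 < u := hspos.trans h1
  have key : -4 * u ^ 8 + 12 * s * u ^ 7 - 48 * u ^ 6 + 8 * s * u ^ 5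
        + 36 * u ^ 4 + 12 * s * u ^ 3
      = -4 * u ^ 3 * (u - s) * ((u * (u - s)) ^ 2 + 6 * u ^ 2 + 6 * s * u + 3) := by
    linear_combination (12 * u ^ 6 - 4 * s * u ^ 5 - 24 * u ^ 4) * hs2
  have hlt : -4 * u ^ 3 * (u - s) * ((u * (u - s)) ^ 2 + 6 * u ^ 2 + 6 * s * u + 3) < 0 := by
    have h4 : 0 < (u * (u - s)) ^ 2 + 6 * u ^ 2 + 6 * s * u + 3 := by positivity
    have h5 : 0 < (4 * u ^ 3) * (u - s) := by
      have : 0 < u - s := sub_pos.mpr h1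
      positivity
    nlinarith [mul_pos h5 h4]
  rw [key]
  exact ne_of_lt hlt
end

section
/- The expression E(t) = (9t/(3t² + 2t + 3)^{3/2} - 9/(3t² + 2t + 3)^{3/2} + √3 t/(t - 1)³ - √3/(t - 1)³)² multiplied by 4/81 is strictly positive (in particular nonzero) for all t ∈ (0, 1). -/
/-- The `2×2` minor `(4/81)·E(t)` of the block `𝔱₄` for two nested regular
tetrahedra is strictly positive on `(0,1)`. -/
theorem stmt12 :
    ∀ t ∈ Set.Ioo (0 : ℝ) 1,
      0 < (4 / 81) *
        (9 * t / (Real.sqrt (3 * t ^ 2 + 2 * t + 3)) ^ 3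
          - 9 / (Real.sqrt (3 * t ^ 2 + 2 * t + 3)) ^ 3
          + Real.sqrt 3 * t / (t - 1) ^ 3
          - Real.sqrt 3 / (t - 1) ^ 3) ^ 2 := by
  rintro t ⟨ht0, ht1⟩
  set s := Real.sqrt (3 * t ^ 2 + 2 * t + 3) with hs
  have hA : (0 : ℝ) < 3 * t ^ 2 + 2 * t + 3 := by nlinarith
  have hspos : 0 < s := Real.sqrt_pos.mpr hA
  have hs2 : s ^ 2 = 3 * t ^ 2 + 2 * t + 3 := Real.sq_sqrt hA.le
  have h3 : Real.sqrt 3 ^ 2 = 3 := Real.sq_sqrt (by norm_num)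
  have h3pos : 0 < Real.sqrt 3 := Real.sqrt_pos.mpr (by norm_num)
  have htm : t - 1 ≠ 0 := by linarith
  have hsne : s ≠ 0 := ne_of_gt hspos
  -- s > √3 * (1 - t)
  have hgt : Real.sqrt 3 * (1 - t) < s := by
    have h1 : Real.sqrt 3 * (1 - t) = Real.sqrt (3 * (1 - t) ^ 2) := by
      rw [Real.sqrt_mul (by norm_num), Real.sqrt_sq (by linarith)]
    rw [h1, hs]
    apply Real.sqrt_lt_sqrt (by positivity)
    nlinarith
  have hcube : (Real.sqrt 3 * (1 - t)) ^ 3 < s ^ 3 := by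
    apply pow_lt_pow_left₀ hgt (mul_nonneg h3pos.le (by linarith)) (by norm_num)
  have hx : (Real.sqrt 3 * (1 - t)) ^ 3 = 3 * Real.sqrt 3 * (1 - t) ^ 3 := by
    rw [mul_pow, show (Real.sqrt 3 : ℝ) ^ 3 = Real.sqrt 3 ^ 2 * Real.sqrt 3 from by ring, h3]
  rw [hx] at hcube
  have h9 : Real.sqrt 3 * (3 * Real.sqrt 3 * (1 - t) ^ 3) = 9 * (1 - t) ^ 3 := by
    nlinarith [h3]
  -- numerator positive
  have hnum : 0 < Real.sqrt 3 * s ^ 3 - 9 * (1 - t) ^ 3 := by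
    have := mul_lt_mul_of_pos_left hcube h3pos
    rw [h9] at this
    linarith
  have hE : 9 * t / s ^ 3 - 9 / s ^ 3 + Real.sqrt 3 * t / (t - 1) ^ 3
      - Real.sqrt 3 / (t - 1) ^ 3
      = (Real.sqrt 3 * s ^ 3 - 9 * (1 - t) ^ 3) / (s ^ 3 * (1 - t) ^ 2) := by
    have h1t : (1 : ℝ) - t ≠ 0 := by linarith
    field_simp
    ring
  rw [hE]
  have hden : 0 < s ^ 3 * (1 - t) ^ 2 :=
    mul_pos (pow_pos hspos 3) (pow_pos (by linarith : (0:ℝ) < 1 - t) 2)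
  exact mul_pos (by norm_num) (pow_pos (div_pos hnum hden) 2)
end

section
/- For a central configuration of two nested regular tetrahedra with edge ratio t ∈ (0,1) and equal masses μ_1 on the outer and μ_2 on the inner tetrahedron, there exists δ ∈ (0,1) such that μ_1 and μ_2 have the same sign for t ∈ (0,δ) and opposite signs for t ∈ (δ,1). In particular a central configuration with positive masses is impossible when the tetrahedra are too close (t near 1). -/
/-- Euclidean norm of a vector in `ℝ^n`. -/
noncomputable def enorm' {n : ℕ} (v : Fin n → ℝ) : ℝ := Real.sqrt (∑ i, v i ^ 2)

/-- A configuration `q` with masses `m` is a central configuration: for some `c > 0`,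
`∑_{j ≠ i} m_j (1/|q_j - q_i|³ - c)(q_j - q_i) = 0` for every `i`. -/
def IsCentralConfig {N n : ℕ} (q : Fin N → Fin n → ℝ) (m : Fin N → ℝ) : Prop :=
  ∃ c : ℝ, 0 < c ∧ ∀ i, ∑ j ∈ Finset.univ.filter (fun j => j ≠ i),
    m j • (((enorm' (q j - q i)) ^ 3)⁻¹ - c) • (q j - q i) = 0

/-- Vertices of the outer regular tetrahedron. -/
def tetraVertices : Fin 4 → Fin 3 → ℝ :=
  ![![1, 1, 1], ![-1, -1, 1], ![-1, 1, -1], ![1, -1, -1]]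

/-- Positions of two nested regular tetrahedra with edge ratio `t`:
the outer vertices `q_j` followed by the inner vertices `t·q_j`. -/
noncomputable def nestedTetra (t : ℝ) : Fin 8 → Fin 3 → ℝ := fun i =>
  if h : (i : ℕ) < 4 then tetraVertices ⟨i, h⟩
  else t • tetraVertices ⟨(i : ℕ) - 4, by have := i.isLt; omega⟩

/-- Masses: `μ₁` on each outer vertex, `μ₂` on each inner vertex. -/
noncomputable def nestedTetraMass (μ1 μ2 : ℝ) : Fin 8 → ℝ := fun i =>
  if (i : ℕ) < 4 then μ1 else μ2

/-!
Subtracting `t` times the `x`-component of the equation at the outer vertex `q₁` from that at the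
inner vertex `t q₁` eliminates `c` (the centre of mass is the origin) and leaves
`μ₁ P(t) + μ₂ Q(t) = 0` (`outerCoeff`, `innerCoeff`) with `P > 0` on `(0,1)`. So `μ₁ μ₂` has the
sign of `-t² Q(t)`, and `t² Q(t)` is strictly increasing on `(0,1)`, negative at `1/3` and positive
at `3/4`; `δ` is its zero.
-/

lemma sqrt_pow_three_sq {x : ℝ} (hx : 0 ≤ x) : (√x ^ 3) ^ 2 = x ^ 3 := by
  rw [← pow_mul, mul_comm, pow_mul, Real.sq_sqrt hx]

lemma mul_sign_of_balance {a b p q : ℝ} (hp : 0 < p) (hb : b ≠ 0) (h : a * p + b * q = 0) :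
    (q < 0 → 0 < a * b) ∧ (0 < q → a * b < 0) := by
  have hab : a * b * p = -(b ^ 2 * q) := by linear_combination b * h
  have hb2 : 0 < b ^ 2 := by positivity
  refine ⟨fun hq => pos_of_mul_pos_left ?_ hp.le, fun hq => neg_of_mul_neg_left ?_ hp.le⟩
  · exact hab ▸ neg_pos.2 (mul_neg_of_pos_of_neg hb2 hq)
  · exact hab ▸ neg_neg_of_pos (mul_pos hb2 hq)

lemma crossDistSq_pos (t : ℝ) : 0 < 3 * t ^ 2 + 2 * t + 3 := by
  nlinarith [sq_nonneg (t + 1), sq_nonneg t]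

/- The distances occurring are `|q_j - t q_j| = √3 (1 - t)`, `|q_i - t q_j| = √(3t² + 2t + 3)`
for `i ≠ j`, and the edges `√8`, `√8 t` of the two tetrahedra. -/
noncomputable def outerCoeff (t : ℝ) : ℝ :=
  (1 - t) / (√3 * (1 - t)) ^ 3 - (1 + 3 * t) / √(3 * t ^ 2 + 2 * t + 3) ^ 3 + 4 * t / √8 ^ 3

noncomputable def innerCoeff (t : ℝ) : ℝ :=
  t * (1 - t) / (√3 * (1 - t)) ^ 3 + t * (t + 3) / √(3 * t ^ 2 + 2 * t + 3) ^ 3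
    - 4 * t / (√8 * t) ^ 3

noncomputable def rescaledInnerCoeff (t : ℝ) : ℝ :=
  t ^ 3 / (√3 ^ 3 * (1 - t) ^ 2) + (t / √(3 * t ^ 2 + 2 * t + 3)) ^ 3 * (t + 3) - 4 / √8 ^ 3

lemma IsCentralConfig.nestedTetra_balance {t μ1 μ2 : ℝ} (ht0 : 0 < t) (ht1 : t < 1)
    (h : IsCentralConfig (nestedTetra t) (nestedTetraMass μ1 μ2)) :
    μ1 * outerCoeff t + μ2 * innerCoeff t = 0 := by
  obtain ⟨c, -, hc⟩ := h
  have h0 := congrFun (hc 0) 0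
  have h4 := congrFun (hc 4) 0
  simp [Finset.sum_filter, Fin.sum_univ_eight, nestedTetra, tetraVertices, nestedTetraMass,
    Fin.sum_univ_three, enorm'] at h0 h4
  have hdiag : √(3 * (1 - t) ^ 2) = √3 * (1 - t) := by
    rw [Real.sqrt_mul zero_le_three, Real.sqrt_sq (by linarith)]
  have hinner : √(8 * t ^ 2) = √8 * t := by
    rw [Real.sqrt_mul (by norm_num), Real.sqrt_sq ht0.le]
  rw [show (-1 - 1 : ℝ) ^ 2 + (-1 - 1) ^ 2 = 8 by norm_num,
    show (t - 1) ^ 2 + (t - 1) ^ 2 + (t - 1) ^ 2 = 3 * (1 - t) ^ 2 by ring,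
    show (-t - 1) ^ 2 + (-t - 1) ^ 2 + (t - 1) ^ 2 = 3 * t ^ 2 + 2 * t + 3 by ring,
    show (-t - 1) ^ 2 + (t - 1) ^ 2 + (-t - 1) ^ 2 = 3 * t ^ 2 + 2 * t + 3 by ring,
    show (t - 1) ^ 2 + (-t - 1) ^ 2 + (-t - 1) ^ 2 = 3 * t ^ 2 + 2 * t + 3 by ring, hdiag] at h0
  rw [show (1 - t) ^ 2 + (1 - t) ^ 2 + (1 - t) ^ 2 = 3 * (1 - t) ^ 2 by ring,
    show (-1 - t) ^ 2 + (-1 - t) ^ 2 + (1 - t) ^ 2 = 3 * t ^ 2 + 2 * t + 3 by ring,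
    show (-1 - t) ^ 2 + (1 - t) ^ 2 + (-1 - t) ^ 2 = 3 * t ^ 2 + 2 * t + 3 by ring,
    show (1 - t) ^ 2 + (-1 - t) ^ 2 + (-1 - t) ^ 2 = 3 * t ^ 2 + 2 * t + 3 by ring,
    show (-t - t) ^ 2 + (-t - t) ^ 2 = 8 * t ^ 2 by ring, hdiag, hinner] at h4
  unfold outerCoeff innerCoeff
  linear_combination h4 - t * h0

lemma outerCoeff_pos {t : ℝ} (ht0 : 0 < t) (ht1 : t < 1) : 0 < outerCoeff t := by
  have h1t : 0 < 1 - t := by linarith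
  have hs := Real.sqrt_pos.2 (crossDistSq_pos t)
  have hcross : (1 + 3 * t) / √(3 * t ^ 2 + 2 * t + 3) ^ 3 < (1 - t) / (√3 * (1 - t)) ^ 3 := by
    rw [div_lt_div_iff₀ (by positivity) (by positivity)]
    refine lt_of_pow_lt_pow_left₀ 2 (by positivity) ?_
    have hgap : 0 < t ^ 2 * (360 * (1 - t ^ 2) ^ 2 + 224 * t + 288 * t ^ 3 * (3 - 2 * t)) := by
      have : 0 < 3 - 2 * t := by linarith
      positivity
    rw [mul_pow, mul_pow, mul_pow, mul_pow, sqrt_pow_three_sq zero_le_three,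
      sqrt_pow_three_sq (crossDistSq_pos t).le]
    linear_combination (1 - t) ^ 2 * hgap
  have : 0 < 4 * t / √8 ^ 3 := by positivity
  unfold outerCoeff
  linarith

lemma sq_mul_innerCoeff {t : ℝ} (ht : t ≠ 0) : t ^ 2 * innerCoeff t = rescaledInnerCoeff t := by
  unfold innerCoeff rescaledInnerCoeff
  field_simp

/- The square of `t / √(3t² + 2t + 3)` is `1 / (3 + 2/t + 3/t²)`. -/
lemma strictMonoOn_div_sqrt_crossDistSq :
    StrictMonoOn (fun t : ℝ => t / √(3 * t ^ 2 + 2 * t + 3)) (Set.Ioi 0) := by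
  intro a (ha : 0 < a) b (hb : 0 < b) hab
  rw [div_lt_div_iff₀ (Real.sqrt_pos.2 (crossDistSq_pos a)) (Real.sqrt_pos.2 (crossDistSq_pos b))]
  refine lt_of_pow_lt_pow_left₀ 2 (by positivity) ?_
  rw [mul_pow, mul_pow, Real.sq_sqrt (crossDistSq_pos a).le, Real.sq_sqrt (crossDistSq_pos b).le]
  nlinarith [mul_pos (mul_pos ha ha) (sub_pos.2 hab), mul_pos (mul_pos ha hb) (sub_pos.2 hab)]

lemma rescaledInnerCoeff_strictMonoOn : StrictMonoOn rescaledInnerCoeff (Set.Ioo 0 1) := by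
  rintro a ⟨ha0, -⟩ b ⟨hb0, hb1⟩ hab
  have hf : a / √(3 * a ^ 2 + 2 * a + 3) < b / √(3 * b ^ 2 + 2 * b + 3) :=
    strictMonoOn_div_sqrt_crossDistSq ha0 hb0 hab
  have hfa : 0 < a / √(3 * a ^ 2 + 2 * a + 3) := div_pos ha0 (Real.sqrt_pos.2 (crossDistSq_pos a))
  have : 0 < 1 - b := by linarith
  unfold rescaledInnerCoeff
  gcongr

lemma rescaledInnerCoeff_one_third_neg : rescaledInnerCoeff (1 / 3) < 0 := by
  have hcross : √(3 * (1 / 3 : ℝ) ^ 2 + 2 * (1 / 3) + 3) = 2 := by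
    rw [show 3 * (1 / 3 : ℝ) ^ 2 + 2 * (1 / 3) + 3 = 2 ^ 2 by norm_num, Real.sqrt_sq zero_le_two]
  have h3 : 1 < √3 := by rw [Real.lt_sqrt zero_le_one]; norm_num
  have h8 : √8 < 3 := by rw [Real.sqrt_lt' three_pos]; norm_num
  have hA : (1 / 3 : ℝ) ^ 3 / (√3 ^ 3 * (1 - 1 / 3) ^ 2) < 1 / 12 := by
    rw [div_lt_div_iff₀ (by positivity) (by norm_num)]
    nlinarith [one_lt_pow₀ h3 (by norm_num : 3 ≠ 0)]
  have hC : 4 / 27 < 4 / √8 ^ 3 := by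
    gcongr
    calc √8 ^ 3 < 3 ^ 3 := by gcongr
      _ = 27 := by norm_num
  unfold rescaledInnerCoeff
  rw [hcross]
  norm_num at hA hC ⊢
  linarith

lemma rescaledInnerCoeff_three_quarters_pos : 0 < rescaledInnerCoeff (3 / 4) := by
  have h3 : √3 < 7 / 4 := by rw [Real.sqrt_lt' (by norm_num)]; norm_num
  have h8 : 2 < √8 := by rw [Real.lt_sqrt zero_le_two]; norm_num
  have hA : 1 < (3 / 4 : ℝ) ^ 3 / (√3 ^ 3 * (1 - 3 / 4) ^ 2) := by
    rw [lt_div_iff₀ (by positivity)]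
    nlinarith [pow_lt_pow_left₀ h3 (Real.sqrt_nonneg 3) (by norm_num : 3 ≠ 0)]
  have hC : 4 / √8 ^ 3 < 1 := by
    rw [div_lt_one (by positivity)]
    nlinarith [pow_lt_pow_left₀ h8 zero_le_two (by norm_num : 3 ≠ 0)]
  have hB : 0 ≤ (3 / 4 / √(3 * (3 / 4 : ℝ) ^ 2 + 2 * (3 / 4) + 3)) ^ 3 * (3 / 4 + 3) := by
    positivity
  unfold rescaledInnerCoeff
  linarith

lemma continuousOn_rescaledInnerCoeff : ContinuousOn rescaledInnerCoeff (Set.Ioo 0 1) := by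
  have hs (t : ℝ) : √(3 * t ^ 2 + 2 * t + 3) ≠ 0 := (Real.sqrt_pos.2 (crossDistSq_pos t)).ne'
  intro t ht
  have : 1 - t ≠ 0 := by linarith [ht.2]
  unfold rescaledInnerCoeff
  fun_prop (disch := first | positivity | exact hs _)

lemma exists_rescaledInnerCoeff_eq_zero :
    ∃ δ ∈ Set.Icc (1 / 3 : ℝ) (3 / 4), rescaledInnerCoeff δ = 0 :=
  intermediate_value_Icc (by norm_num)
    (continuousOn_rescaledInnerCoeff.mono (Set.Icc_subset_Ioo (by norm_num) (by norm_num)))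
    ⟨rescaledInnerCoeff_one_third_neg.le, rescaledInnerCoeff_three_quarters_pos.le⟩

/-- For central configurations of two nested regular tetrahedra (edge ratio `t`,
equal mass `μ₁` on the outer and `μ₂` on the inner tetrahedron), there is a
`δ ∈ (0,1)` such that the masses have the same sign for `t ∈ (0,δ)` and opposite
signs for `t ∈ (δ,1)`. -/
theorem stmt14 : ∃ δ : ℝ, 0 < δ ∧ δ < 1 ∧
    ∀ t μ1 μ2 : ℝ, 0 < t → t < 1 → μ1 ≠ 0 → μ2 ≠ 0 →
      IsCentralConfig (nestedTetra t) (nestedTetraMass μ1 μ2) →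
        ((t < δ → 0 < μ1 * μ2) ∧ (δ < t → μ1 * μ2 < 0)) := by
  obtain ⟨δ, ⟨hδ0, hδ1⟩, hδ⟩ := exists_rescaledInnerCoeff_eq_zero
  refine ⟨δ, by linarith, by linarith, fun t μ1 μ2 ht0 ht1 _ hμ2 hcc => ?_⟩
  have hδIoo : δ ∈ Set.Ioo 0 1 := ⟨by linarith, by linarith⟩
  have htIoo : t ∈ Set.Ioo 0 1 := ⟨ht0, ht1⟩
  have hinner : innerCoeff t = rescaledInnerCoeff t / t ^ 2 := by
    rw [← sq_mul_innerCoeff ht0.ne', mul_div_cancel_left₀ _ (by positivity)]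
  have hsign := mul_sign_of_balance (outerCoeff_pos ht0 ht1) hμ2 (hcc.nestedTetra_balance ht0 ht1)
  refine ⟨fun htδ => hsign.1 ?_, fun htδ => hsign.2 ?_⟩
  · rw [hinner]
    refine div_neg_of_neg_of_pos ?_ (by positivity)
    simpa [hδ] using rescaledInnerCoeff_strictMonoOn htIoo hδIoo htδ
  · rw [hinner]
    refine div_pos ?_ (by positivity)
    simpa [hδ] using rescaledInnerCoeff_strictMonoOn hδIoo htIoo htδ
end

section
/- Let p(x_1,...,x_n) be a real polynomial and B = Π_{k=1}^n [a_k, b_k] a box. For an interval I = (a,b] define p|_I(u) = (u+1)^{deg p} · p((au+b)/(u+1)) variable by variable, giving p|_B. If there is a finite covering of B by boxes B_α such that for each α all coefficients of p|_{B_α} have the same sign, then p has no zero on B. -/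
open MvPolynomial

/-- The multivariate Möbius transform `p|_B` of a polynomial `p` with respect to
the box `B = ∏ₖ [aₖ, bₖ]`: substituting `xₖ = (aₖ uₖ + bₖ)/(uₖ + 1)` in each
variable and clearing denominators using the degree `Dₖ = degᵏ p`, i.e.
`p|_B = ∑_m coeff m p · ∏ₖ (aₖ Xₖ + bₖ)^{mₖ} (Xₖ + 1)^{Dₖ - mₖ}`. -/
noncomputable def mobiusTransform {n : ℕ} (p : MvPolynomial (Fin n) ℝ)
    (a b : Fin n → ℝ) : MvPolynomial (Fin n) ℝ :=
  ∑ m ∈ p.support, MvPolynomial.C (p.coeff m) *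
    ∏ k, (MvPolynomial.C (a k) * MvPolynomial.X k + MvPolynomial.C (b k)) ^ (m k)
      * (MvPolynomial.X k + 1) ^ (p.degreeOf k - m k)

/-- All coefficients (up to the degree bound `D` in each variable) of `q` have the
same (strict) sign. -/
def allCoeffsSameSign {n : ℕ} (q : MvPolynomial (Fin n) ℝ) (D : Fin n → ℕ) : Prop :=
  (∀ m : Fin n →₀ ℕ, (∀ k, m k ≤ D k) → 0 < q.coeff m) ∨
  (∀ m : Fin n →₀ ℕ, (∀ k, m k ≤ D k) → q.coeff m < 0)


/-!
For `x` in a box with `a ≤ b`, write each coordinate as a convex combination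
`xₖ = aₖ tₖ + bₖ sₖ`, `tₖ + sₖ = 1`, `tₖ, sₖ ≥ 0`. Then `p(x)` equals the per-variable
homogenization of `q = p|_B` at the point `[t : s]`, that is
`∑_{j ≤ D} q_j ∏ₖ tₖ^{jₖ} sₖ^{Dₖ - jₖ}`: for `s` with nonzero coordinates this is
`∏ₖ sₖ^{Dₖ} · q(t/s)` (the Möbius substitution at `uₖ = tₖ/sₖ`), and both sides are
continuous in `s`. Every weight is nonnegative and at least one is positive, so if
all `q_j` share a sign, so does `p(x)`.
-/

namespace MvPolynomial

section Homogenization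

variable {σ : Type*} [Fintype σ] [DecidableEq σ]

noncomputable def homogenizedEval (q : MvPolynomial σ ℝ) (D : σ →₀ ℕ) (t s : σ → ℝ) : ℝ :=
  ∑ j ∈ Finset.Iic D, q.coeff j * ∏ k, t k ^ j k * s k ^ (D k - j k)

lemma homogenizedEval_neg (q : MvPolynomial σ ℝ) (D : σ →₀ ℕ) (t s : σ → ℝ) :
    homogenizedEval (-q) D t s = -homogenizedEval q D t s := by
  simp only [homogenizedEval, coeff_neg, neg_mul, Finset.sum_neg_distrib]

lemma homogenizedEval_eq_prod_mul_eval {q : MvPolynomial σ ℝ} {D : σ →₀ ℕ}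
    (hq : ∀ j ∈ q.support, j ≤ D) (t : σ → ℝ) {s : σ → ℝ} (hs : ∀ k, s k ≠ 0) :
    homogenizedEval q D t s = (∏ k, s k ^ D k) * eval (fun k => t k / s k) q := by
  rw [eval_eq', Finset.mul_sum, homogenizedEval,
    ← Finset.sum_subset (fun j hj => Finset.mem_Iic.mpr (hq j hj))
      (fun j _ hj => by rw [notMem_support_iff.mp hj, zero_mul])]
  refine Finset.sum_congr rfl fun j hj => ?_
  rw [mul_left_comm, ← Finset.prod_mul_distrib]
  congr 1
  refine Finset.prod_congr rfl fun k _ => ?_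
  rw [div_pow, ← Nat.add_sub_cancel' (Finsupp.le_def.mp (hq j hj) k), pow_add,
    Nat.add_sub_cancel_left]
  field_simp [pow_ne_zero (j k) (hs k)]

lemma homogenizedEval_pos {q : MvPolynomial σ ℝ} {D : σ →₀ ℕ} (hq : ∀ j ≤ D, 0 < q.coeff j)
    {t s : σ → ℝ} (ht : ∀ k, 0 ≤ t k) (hs : ∀ k, 0 ≤ s k) (hts : ∀ k, 0 < t k + s k) :
    0 < homogenizedEval q D t s := by
  have hweight : ∀ j : σ →₀ ℕ, 0 ≤ ∏ k, t k ^ j k * s k ^ (D k - j k) := fun j =>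
    Finset.prod_nonneg fun k _ => mul_nonneg (pow_nonneg (ht k) _) (pow_nonneg (hs k) _)
  -- In each coordinate put all of the degree on whichever of `tₖ`, `sₖ` is positive.
  let j₀ : σ →₀ ℕ := Finsupp.equivFunOnFinite.symm fun k => if 0 < t k then D k else 0
  have hj₀ : j₀ ≤ D := Finsupp.le_def.mpr fun k => by
    simp only [j₀, Finsupp.coe_equivFunOnFinite_symm]
    split_ifs <;> omega
  have hweight₀ : 0 < ∏ k, t k ^ j₀ k * s k ^ (D k - j₀ k) := by
    refine Finset.prod_pos fun k _ => ?_
    simp only [j₀, Finsupp.coe_equivFunOnFinite_symm]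
    split_ifs with h
    · simpa using pow_pos h (D k)
    · have : 0 < s k := by linarith [ht k, hts k, not_lt.mp h]
      simpa using pow_pos this (D k)
  refine Finset.sum_pos' (fun j hj => mul_nonneg (hq j (Finset.mem_Iic.mp hj)).le (hweight j))
    ⟨j₀, Finset.mem_Iic.mpr hj₀, mul_pos (hq j₀ hj₀) hweight₀⟩

end Homogenization

lemma degreeOf_C_mul_X_add_C_le {R σ : Type*} [CommSemiring R] [Nontrivial R] [DecidableEq σ]
    (c d : R) (i j : σ) :
    degreeOf i (C c * X j + C d) ≤ if i = j then 1 else 0 := by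
  refine (degreeOf_add_le _ _ _).trans ?_
  rw [degreeOf_C, max_le_iff]
  refine ⟨(degreeOf_mul_le _ _ _).trans ?_, Nat.zero_le _⟩
  rw [degreeOf_C, zero_add, degreeOf_X]

lemma degreeOf_mobiusFactor_le {R σ : Type*} [CommSemiring R] [Nontrivial R] [DecidableEq σ]
    (a b : R) (i j : σ) (m e : ℕ) :
    degreeOf i ((C a * X j + C b) ^ m * (X j + 1) ^ e) ≤ if i = j then m + e else 0 := by
  refine (degreeOf_mul_le _ _ _).trans ?_
  have h₁ := (degreeOf_pow_le i _ m).trans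
    (Nat.mul_le_mul_left m (degreeOf_C_mul_X_add_C_le a b i j))
  have h₂ : degreeOf i ((X j + 1 : MvPolynomial σ R) ^ e) ≤ e * if i = j then 1 else 0 := by
    have := (degreeOf_pow_le i (C 1 * X j + C 1 : MvPolynomial σ R) e).trans
      (Nat.mul_le_mul_left e (degreeOf_C_mul_X_add_C_le 1 1 i j))
    rwa [map_one, one_mul] at this
  split_ifs at h₁ h₂ ⊢ <;> omega

section Mobius

variable {n : ℕ}

lemma degreeOf_mobiusTransform_le (p : MvPolynomial (Fin n) ℝ) (a b : Fin n → ℝ) (i : Fin n) :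
    (mobiusTransform p a b).degreeOf i ≤ p.degreeOf i := by
  refine (degreeOf_sum_le _ _ _).trans (Finset.sup_le fun m hm => ?_)
  refine (degreeOf_mul_le _ _ _).trans ?_
  rw [degreeOf_C, zero_add]
  calc _ ≤ ∑ j, if i = j then m j + (p.degreeOf j - m j) else 0 :=
        (degreeOf_prod_le _ _ _).trans (Finset.sum_le_sum fun j _ => degreeOf_mobiusFactor_le ..)
    _ = p.degreeOf i := by
        rw [Finset.sum_ite_eq, if_pos (Finset.mem_univ _),
          Nat.add_sub_cancel' (monomial_le_degreeOf i hm)]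

noncomputable def degreeOfVec (p : MvPolynomial (Fin n) ℝ) : Fin n →₀ ℕ :=
  Finsupp.equivFunOnFinite.symm fun k => p.degreeOf k

lemma le_degreeOfVec_of_mem_support_mobiusTransform {p : MvPolynomial (Fin n) ℝ}
    {a b : Fin n → ℝ} {j : Fin n →₀ ℕ} (hj : j ∈ (mobiusTransform p a b).support) :
    j ≤ degreeOfVec p :=
  Finsupp.le_def.mpr fun k =>
    (monomial_le_degreeOf k hj).trans (degreeOf_mobiusTransform_le p a b k)

lemma eval_mobiusTransform (p : MvPolynomial (Fin n) ℝ) (a b u : Fin n → ℝ) :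
    eval u (mobiusTransform p a b) = ∑ m ∈ p.support, p.coeff m *
      ∏ k, (a k * u k + b k) ^ m k * (u k + 1) ^ (p.degreeOf k - m k) := by
  simp only [mobiusTransform, map_sum, map_mul, map_prod, map_pow, map_add, eval_C, eval_X,
    map_one]

lemma homogenizedEval_mobiusTransform (p : MvPolynomial (Fin n) ℝ) (a b t s : Fin n → ℝ) :
    homogenizedEval (mobiusTransform p a b) (degreeOfVec p) t s = ∑ m ∈ p.support, p.coeff m *
      ∏ k, (a k * t k + b k * s k) ^ m k * (t k + s k) ^ (p.degreeOf k - m k) := by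
  suffices (fun s => homogenizedEval (mobiusTransform p a b) (degreeOfVec p) t s) =
      fun s => ∑ m ∈ p.support, p.coeff m *
        ∏ k, (a k * t k + b k * s k) ^ m k * (t k + s k) ^ (p.degreeOf k - m k) from
    congrFun this s
  have hdense : Dense {s : Fin n → ℝ | ∀ k, s k ≠ 0} := by
    simpa [Set.pi, Set.compl_def] using dense_pi Set.univ fun k _ => dense_compl_singleton (0 : ℝ)
  refine Continuous.ext_on hdense (by unfold homogenizedEval; fun_prop) (by fun_prop)
    fun s (hs : ∀ k, s k ≠ 0) => ?_
  rw [homogenizedEval_eq_prod_mul_eval (fun j => le_degreeOfVec_of_mem_support_mobiusTransform)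
    t hs, eval_mobiusTransform, Finset.mul_sum]
  refine Finset.sum_congr rfl fun m hm => ?_
  rw [mul_left_comm, ← Finset.prod_mul_distrib]
  congr 1
  refine Finset.prod_congr rfl fun k _ => ?_
  rw [degreeOfVec, Finsupp.coe_equivFunOnFinite_symm,
    ← Nat.add_sub_cancel' (monomial_le_degreeOf k hm), pow_add, Nat.add_sub_cancel_left]
  have hA : a k * t k + b k * s k = s k * (a k * (t k / s k) + b k) := by
    field_simp [hs k]
  have hB : t k + s k = s k * (t k / s k + 1) := by field_simp [hs k]
  rw [hA, hB, mul_pow, mul_pow]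
  ring

lemma eval_eq_homogenizedEval_mobiusTransform (p : MvPolynomial (Fin n) ℝ)
    (a b t s : Fin n → ℝ) (hts : ∀ k, t k + s k = 1) :
    eval (fun k => a k * t k + b k * s k) p =
      homogenizedEval (mobiusTransform p a b) (degreeOfVec p) t s := by
  simp only [homogenizedEval_mobiusTransform, hts, one_pow, mul_one, eval_eq']

lemma eval_ne_zero_of_allCoeffsSameSign {p : MvPolynomial (Fin n) ℝ} {a b : Fin n → ℝ}
    (hab : ∀ k, a k ≤ b k) (hsign : allCoeffsSameSign (mobiusTransform p a b) (p.degreeOf ·))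
    {x : Fin n → ℝ} (hx : ∀ k, x k ∈ Set.Icc (a k) (b k)) :
    eval x p ≠ 0 := by
  have hseg : ∀ k, x k ∈ segment ℝ (a k) (b k) := fun k => segment_eq_Icc (hab k) ▸ hx k
  choose t s ht hs hts hcomb using hseg
  have hx : x = fun k => a k * t k + b k * s k := by
    ext k
    rw [← hcomb k, smul_eq_mul, smul_eq_mul, mul_comm, mul_comm (s k)]
  have hts_pos : ∀ k, 0 < t k + s k := fun k => by simp [hts k]
  rw [hx, eval_eq_homogenizedEval_mobiusTransform p a b t s hts]
  rcases hsign with hpos | hneg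
  · exact (homogenizedEval_pos (fun j hj => hpos j (Finsupp.le_def.mp hj)) ht hs hts_pos).ne'
  · refine neg_ne_zero.mp ?_
    rw [← homogenizedEval_neg]
    refine (homogenizedEval_pos (fun j hj => ?_) ht hs hts_pos).ne'
    rw [coeff_neg, neg_pos]
    exact hneg j (Finsupp.le_def.mp hj)

end Mobius

end MvPolynomial

theorem stmt16_general {n : ℕ} (p : MvPolynomial (Fin n) ℝ) (a b : Fin n → ℝ)
    {A : Type*} (aα bα : A → Fin n → ℝ)
    (hle : ∀ (α : A) (k : Fin n), aα α k ≤ bα α k)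
    (hcover : (Set.univ.pi fun k => Set.Icc (a k) (b k)) ⊆
      ⋃ α : A, Set.univ.pi fun k => Set.Icc (aα α k) (bα α k))
    (hsign : ∀ α : A,
      allCoeffsSameSign (mobiusTransform p (aα α) (bα α)) (fun k => p.degreeOf k)) :
    ∀ x ∈ Set.univ.pi fun k => Set.Icc (a k) (b k), MvPolynomial.eval x p ≠ 0 := by
  intro x hx
  obtain ⟨α, hxα⟩ := Set.mem_iUnion.mp (hcover hx)
  exact eval_ne_zero_of_allCoeffsSameSign (hle α) (hsign α) fun k => hxα k (Set.mem_univ k)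

/-- Barros–Leandro criterion: if a box `B` admits a finite covering by boxes `B_α`
such that all Möbius coefficients of `p|_{B_α}` have the same sign for every `α`,
then `p` has no zero on `B`. -/
theorem stmt16 {n : ℕ} (p : MvPolynomial (Fin n) ℝ) (a b : Fin n → ℝ)
    {A : Type*} [Fintype A] (aα bα : A → Fin n → ℝ)
    (hle : ∀ (α : A) (k : Fin n), aα α k ≤ bα α k)
    (hcover : (Set.univ.pi fun k => Set.Icc (a k) (b k)) ⊆
      ⋃ α : A, Set.univ.pi fun k => Set.Icc (aα α k) (bα α k))
    (hsign : ∀ α : A,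
      allCoeffsSameSign (mobiusTransform p (aα α) (bα α)) (fun k => p.degreeOf k)) :
    ∀ x ∈ Set.univ.pi fun k => Set.Icc (a k) (b k), MvPolynomial.eval x p ≠ 0 :=
  stmt16_general p a b aα bα hle hcover hsign
end
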